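/- arXiv:1810.06064 — 4 statements merged into one kernel-verified Lean document; each statement's English description precedes it below -/
import Mathlib

section
/- Let σ, R > 0, let ν, q : ℝ^d → ℝ be smooth, let c ∈ ℝ, and suppose v : [0,∞) × ℝ^d → ℝ is C¹ in t and C² in x and satisfies the time-varying HJB equation −∂_t v = q − c − |∇v|²/(2R) − ∇v·∇ν + (σ²/2)Δv pointwise. Then the transformed function f(t,x) := exp(−(v(t,x) + R ν(x))/(σ²R)) satisfies the imaginary-time Schrödinger-type equation −∂_t f = (c/(σ²R)) f − (V/(σ²R)) f + (σ²/2) Δf pointwise on [0,∞) × ℝ^d, where V(x) := q(x) + (R/2)|∇ν(x)|² − (σ²R/2)Δν(x). -/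
open MeasureTheory
open scoped BigOperators RealInnerProductSpace

/-- Divergence of a vector field on `ℝ^d`. -/
noncomputable def vdiv {d : ℕ} (X : EuclideanSpace ℝ (Fin d) → EuclideanSpace ℝ (Fin d))
    (x : EuclideanSpace ℝ (Fin d)) : ℝ :=
  ∑ i, fderiv ℝ X x (EuclideanSpace.single i 1) i

/-- Laplacian of a scalar field on `ℝ^d`, as the divergence of the gradient. -/
noncomputable def lap {d : ℕ} (f : EuclideanSpace ℝ (Fin d) → ℝ)
    (x : EuclideanSpace ℝ (Fin d)) : ℝ :=
  vdiv (gradient f) x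

section aux

open InnerProductSpace

variable {E : Type*} [NormedAddCommGroup E] [InnerProductSpace ℝ E] [CompleteSpace E]

lemma hasGradientAt_exp_mul {g : E → ℝ} {G : E} {y : E} (b : ℝ) (hg : HasGradientAt g G y) :
    HasGradientAt (fun z => Real.exp (b * g z)) ((b * Real.exp (b * g y)) • G) y := by
  have h1 : HasFDerivAt (fun z => b * g z) (b • (toDual ℝ E G)) y :=
    hg.hasFDerivAt.const_mul b
  have h2 := h1.exp
  rw [hasGradientAt_iff_hasFDerivAt, _root_.map_smul]
  have : (b * Real.exp (b * g y)) • (toDual ℝ E G)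
      = Real.exp (b * g y) • (b • toDual ℝ E G) := by
    rw [smul_smul, mul_comm]
  rw [this]; exact h2

lemma contDiff_gradient_one {g : E → ℝ} (hg : ContDiff ℝ 2 g) :
    ContDiff ℝ 1 (gradient g) :=
  ((toDual ℝ E).symm.contDiff).comp (hg.fderiv_right (by norm_num))

lemma contDiff_gradient_top {g : E → ℝ} (hg : ContDiff ℝ (⊤ : ℕ∞) g) :
    ContDiff ℝ (⊤ : ℕ∞) (gradient g) :=
  ((toDual ℝ E).symm.contDiff).comp (hg.fderiv_right (by simp))

end aux

/-- If `v` solves the time-varying HJB equation, then `f = exp(−(v + Rν)/(σ²R))` solves the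
imaginary-time Schrödinger equation `−∂ₜf = (c/(σ²R))f − (V/(σ²R))f + (σ²/2)Δf`, with modified
potential `V = q + (R/2)|∇ν|² − (σ²R/2)Δν`. -/
theorem transform_gives_schrodinger_for_f
    (d : ℕ) (σ R : ℝ) (hσ : 0 < σ) (hR : 0 < R)
    (ν q : EuclideanSpace ℝ (Fin d) → ℝ) (hν : ContDiff ℝ (⊤ : ℕ∞) ν) (hq : ContDiff ℝ (⊤ : ℕ∞) q)
    (c : ℝ) (v : ℝ → EuclideanSpace ℝ (Fin d) → ℝ)
    (hvt : ∀ x, ContDiff ℝ 1 fun t => v t x)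
    (hvx : ∀ t, ContDiff ℝ 2 (v t))
    (hHJB : ∀ t, 0 ≤ t → ∀ x,
      -deriv (fun s => v s x) t =
        q x - c - ‖gradient (v t) x‖ ^ 2 / (2 * R)
          - ⟪gradient (v t) x, gradient ν x⟫ + σ ^ 2 / 2 * lap (v t) x)
    (V : EuclideanSpace ℝ (Fin d) → ℝ)
    (hV : ∀ x, V x = q x + R / 2 * ‖gradient ν x‖ ^ 2 - σ ^ 2 * R / 2 * lap ν x)
    (f : ℝ → EuclideanSpace ℝ (Fin d) → ℝ)
    (hf : ∀ t x, f t x = Real.exp (-(v t x + R * ν x) / (σ ^ 2 * R))) :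
    ∀ t, 0 ≤ t → ∀ x,
      -deriv (fun s => f s x) t =
        c / (σ ^ 2 * R) * f t x - V x / (σ ^ 2 * R) * f t x + σ ^ 2 / 2 * lap (f t) x := by
  intro t ht x
  have hσR : (σ ^ 2 * R) ≠ 0 := by positivity
  set b : ℝ := -(σ ^ 2 * R)⁻¹ with hb
  have hfe : ∀ s y, f s y = Real.exp (b * (v s y + R * ν y)) := by
    intro s y; rw [hf]; congr 1; rw [hb, div_eq_mul_inv]; ring
  -- differentiability facts
  have hνd : Differentiable ℝ ν := hν.differentiable (by simp)
  have hvd : Differentiable ℝ (v t) := (hvx t).differentiable two_ne_zero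
  have hGv : ContDiff ℝ 1 (gradient (v t)) := contDiff_gradient_one (hvx t)
  have hGν : ContDiff ℝ (⊤ : ℕ∞) (gradient ν) := contDiff_gradient_top hν
  set W : EuclideanSpace ℝ (Fin d) → EuclideanSpace ℝ (Fin d) :=
    fun y => gradient (v t) y + R • gradient ν y with hW
  have hWd : Differentiable ℝ W :=
    (hGv.differentiable one_ne_zero).add ((hGν.differentiable (by simp)).const_smul R)
  -- gradient of f t
  have hgradf : ∀ y, HasGradientAt (f t) ((b * f t y) • W y) y := by
    intro y
    have h4 : HasGradientAt (fun z => v t z + R * ν z) (W y) y := by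
      rw [hasGradientAt_iff_hasFDerivAt]
      have he : InnerProductSpace.toDual ℝ _ (W y)
          = InnerProductSpace.toDual ℝ _ (gradient (v t) y)
            + R • InnerProductSpace.toDual ℝ _ (gradient ν y) := by
        rw [hW]; simp
      rw [he]
      exact ((hvd y).hasGradientAt.hasFDerivAt).add
        (((hνd y).hasGradientAt.hasFDerivAt).const_mul R)
    have h5 := hasGradientAt_exp_mul b h4
    have hfteq : f t = fun z => Real.exp (b * (v t z + R * ν z)) := funext fun z => hfe t z
    rw [hfteq]
    simpa using h5
  have hgrad_eq : gradient (f t) = fun y => (b * f t y) • W y := gradient_eq hgradf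
  -- Laplacian of f t
  have hlapf : lap (f t) x =
      (b * f t x) * (lap (v t) x + R * lap ν x) + b * (b * f t x) * ⟪W x, W x⟫ := by
    have hβ : DifferentiableAt ℝ (fun y => b * f t y) x :=
      ((hgradf x).differentiableAt).const_mul b
    have hWx : DifferentiableAt ℝ W x := hWd x
    have hfd : fderiv ℝ (fun y => (b * f t y) • W y) x
        = (b * f t x) • fderiv ℝ W x
          + (fderiv ℝ (fun y => b * f t y) x).smulRight (W x) := fderiv_smul hβ hWx
    have hfβ : fderiv ℝ (fun y => b * f t y) x = b • fderiv ℝ (f t) x :=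
      fderiv_const_mul (hgradf x).differentiableAt b
    have hfdf : fderiv ℝ (f t) x = InnerProductSpace.toDual ℝ _ ((b * f t x) • W x) :=
      (hgradf x).hasFDerivAt.fderiv
    have hfW : fderiv ℝ W x
        = fderiv ℝ (gradient (v t)) x + R • fderiv ℝ (gradient ν) x := by
      rw [hW]
      rw [fderiv_fun_add (g := fun y => R • gradient ν y) ((hGv.differentiable one_ne_zero) x)
        (((hGν.differentiable (by simp)).const_smul R) x)]
      rw [fderiv_fun_const_smul ((hGν.differentiable (by simp)) x)]
    have hterm : ∀ i, ((b * f t x) • fderiv ℝ W x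
        + (fderiv ℝ (fun y => b * f t y) x).smulRight (W x)) (EuclideanSpace.single i 1) i
        = (b * f t x) * (fderiv ℝ (gradient (v t)) x (EuclideanSpace.single i 1) i)
          + (b * f t x) * (R * (fderiv ℝ (gradient ν) x (EuclideanSpace.single i 1) i))
          + b * (b * f t x) * (W x i * W x i) := by
      intro i
      rw [hfW, hfβ, hfdf]
      simp only [ContinuousLinearMap.add_apply, ContinuousLinearMap.smul_apply,
        ContinuousLinearMap.smulRight_apply, InnerProductSpace.toDual_apply_apply,
        EuclideanSpace.inner_single_right, PiLp.add_apply, PiLp.smul_apply, smul_eq_mul,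
        RCLike.star_def, conj_trivial, one_mul]
      ring
    unfold lap vdiv
    rw [hgrad_eq, hfd]
    simp only [hterm]
    simp only [Finset.sum_add_distrib, ← Finset.mul_sum]
    have hWW2 : (∑ i, W x i * W x i) = ⟪W x, W x⟫ := by
      rw [PiLp.inner_apply]
      simp [RCLike.inner_apply, sq]
    rw [hWW2]
    ring
  -- time derivative
  have hDt : deriv (fun s => f s x) t = f t x * (b * deriv (fun s => v s x) t) := by
    have h1 : HasDerivAt (fun s => v s x) (deriv (fun s => v s x) t) t :=
      ((hvt x).differentiable one_ne_zero t).hasDerivAt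
    have h2 := ((h1.add_const (R * ν x)).const_mul b).exp
    have he : (fun s => f s x) = fun s => Real.exp (b * (v s x + R * ν x)) :=
      funext fun s => hfe s x
    rw [he, h2.deriv, ← hfe t x]
  -- inner product expansion
  have hWW : ⟪W x, W x⟫ = ‖gradient (v t) x‖ ^ 2 + 2 * R * ⟪gradient (v t) x, gradient ν x⟫
      + R ^ 2 * ‖gradient ν x‖ ^ 2 := by
    rw [hW]
    rw [real_inner_add_add_self, real_inner_smul_right, real_inner_smul_left,
      real_inner_smul_right, real_inner_self_eq_norm_sq, real_inner_self_eq_norm_sq]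
    ring
  -- final algebra
  have hhjb := hHJB t ht x
  rw [hDt, hlapf, hWW, hV x, hb]
  have hD : deriv (fun s => v s x) t
      = -(q x - c - ‖gradient (v t) x‖ ^ 2 / (2 * R)
          - ⟪gradient (v t) x, gradient ν x⟫ + σ ^ 2 / 2 * lap (v t) x) := by
    rw [← hhjb]; ring
  rw [hD]
  field_simp
  ring
end

section
/- Let σ, R > 0, let ν, q : ℝ^d → ℝ be smooth, let c ∈ ℝ. Suppose v, p : [0,∞) × ℝ^d → ℝ are C¹ in t and C² in x, v satisfies the time-varying HJB equation −∂_t v = q − c − |∇v|²/(2R) − ∇v·∇ν + (σ²/2)Δv pointwise, and p satisfies the Fokker–Planck equation ∂_t p = ∇·((∇ν + ∇v/R) p) + (σ²/2) Δp pointwise. Define f(t,x) := exp(−(v(t,x) + R ν(x))/(σ²R)) and g(t,x) := p(t,x)/f(t,x). Then g satisfies −∂_t g = −(c/(σ²R)) g + (V/(σ²R)) g − (σ²/2) Δg pointwise on [0,∞) × ℝ^d, where V(x) := q(x) + (R/2)|∇ν(x)|² − (σ²R/2)Δν(x). -/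
open MeasureTheory
open scoped BigOperators RealInnerProductSpace

section Helpers
variable {d : ℕ}
local notation "E" => EuclideanSpace ℝ (Fin d)

lemma inner_gradient (f : E → ℝ) (x w : E) : ⟪gradient f x, w⟫ = fderiv ℝ f x w :=
  InnerProductSpace.toDual_symm_apply

lemma grad_apply (f : E → ℝ) (x : E) (i : Fin d) :
    gradient f x i = fderiv ℝ f x (EuclideanSpace.single i 1) := by
  rw [← inner_gradient, real_inner_comm, EuclideanSpace.inner_single_left]
  simp

lemma gradient_fun_add {f g : E → ℝ} {x : E} (hf : DifferentiableAt ℝ f x)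
    (hg : DifferentiableAt ℝ g x) :
    gradient (fun y => f y + g y) x = gradient f x + gradient g x := by
  unfold gradient
  rw [fderiv_fun_add hf hg, map_add]

lemma toDual_symm_smul (c : ℝ) (L : StrongDual ℝ (EuclideanSpace ℝ (Fin d))) :
    (InnerProductSpace.toDual ℝ E).symm (c • L) = c • (InnerProductSpace.toDual ℝ E).symm L := by
  rw [map_smulₛₗ]; simp

lemma gradient_fun_const_mul {f : E → ℝ} {x : E} (c : ℝ) (hf : DifferentiableAt ℝ f x) :
    gradient (fun y => c * f y) x = c • gradient f x := by
  unfold gradient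
  rw [fderiv_const_mul hf c, toDual_symm_smul]

lemma gradient_fun_mul {f g : E → ℝ} {x : E} (hf : DifferentiableAt ℝ f x)
    (hg : DifferentiableAt ℝ g x) :
    gradient (fun y => f y * g y) x = f x • gradient g x + g x • gradient f x := by
  unfold gradient
  rw [fderiv_fun_mul hf hg, map_add, toDual_symm_smul, toDual_symm_smul]

lemma gradient_fun_exp {f : E → ℝ} {x : E} (hf : DifferentiableAt ℝ f x) :
    gradient (fun y => Real.exp (f y)) x = Real.exp (f x) • gradient f x := by
  unfold gradient
  rw [fderiv_exp hf, toDual_symm_smul]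

lemma grad_differentiable {f : EuclideanSpace ℝ (Fin d) → ℝ} (hf : ContDiff ℝ 2 f) :
    Differentiable ℝ (gradient f) := by
  have h1 : Differentiable ℝ (fderiv ℝ f) :=
    (hf.fderiv_right (m := 1) (by norm_num)).differentiable (by norm_num)
  rw [differentiable_euclidean]
  intro i
  have : (fun y : E => gradient f y i) =
      fun y => (fderiv ℝ f y) (EuclideanSpace.single i 1) := by
    funext y; exact grad_apply f y i
  rw [this]
  exact fun x => (h1 x).clm_apply (differentiableAt_const _)

lemma vdiv_fun_add {X Y : EuclideanSpace ℝ (Fin d) → EuclideanSpace ℝ (Fin d)} {x : EuclideanSpace ℝ (Fin d)}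
    (hX : DifferentiableAt ℝ X x) (hY : DifferentiableAt ℝ Y x) :
    vdiv (fun y => X y + Y y) x = vdiv X x + vdiv Y x := by
  unfold vdiv
  rw [fderiv_fun_add hX hY, ← Finset.sum_add_distrib]
  simp

lemma vdiv_fun_const_smul {X : EuclideanSpace ℝ (Fin d) → EuclideanSpace ℝ (Fin d)} {x : EuclideanSpace ℝ (Fin d)}
    (c : ℝ) (hX : DifferentiableAt ℝ X x) :
    vdiv (fun y => c • X y) x = c * vdiv X x := by
  unfold vdiv
  rw [fderiv_fun_const_smul hX c, Finset.mul_sum]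
  simp

lemma vdiv_fun_smul {h : EuclideanSpace ℝ (Fin d) → ℝ} {X : EuclideanSpace ℝ (Fin d) → EuclideanSpace ℝ (Fin d)}
    {x : EuclideanSpace ℝ (Fin d)}
    (hh : DifferentiableAt ℝ h x) (hX : DifferentiableAt ℝ X x) :
    vdiv (fun y => h y • X y) x = ⟪gradient h x, X x⟫ + h x * vdiv X x := by
  unfold vdiv
  rw [fderiv_fun_smul hh hX]
  simp only [ContinuousLinearMap.add_apply, ContinuousLinearMap.smul_apply,
    ContinuousLinearMap.smulRight_apply, PiLp.add_apply, PiLp.smul_apply, smul_eq_mul]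
  rw [Finset.sum_add_distrib, ← Finset.mul_sum, PiLp.inner_apply]
  simp only [RCLike.inner_apply, starRingEnd_apply, star_trivial, grad_apply]
  ring_nf
  congr 1
  exact Finset.sum_congr rfl fun i _ => mul_comm _ _

end Helpers

/-- If `v` solves the time-varying HJB equation and `p` solves the Fokker–Planck equation
`∂ₜp = ∇·((∇ν + ∇v/R)p) + (σ²/2)Δp`, then the hermitized density `g = p/f`, with
`f = exp(−(v + Rν)/(σ²R))`, solves `−∂ₜg = −(c/(σ²R))g + (V/(σ²R))g − (σ²/2)Δg`. -/
theorem hermitized_density_solves_schrodinger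
    (d : ℕ) (σ R : ℝ) (hσ : 0 < σ) (hR : 0 < R)
    (ν q : EuclideanSpace ℝ (Fin d) → ℝ) (hν : ContDiff ℝ (⊤ : ℕ∞) ν) (hq : ContDiff ℝ (⊤ : ℕ∞) q)
    (c : ℝ) (v p : ℝ → EuclideanSpace ℝ (Fin d) → ℝ)
    (hvt : ∀ x, ContDiff ℝ 1 fun t => v t x)
    (hvx : ∀ t, ContDiff ℝ 2 (v t))
    (hpt : ∀ x, ContDiff ℝ 1 fun t => p t x)
    (hpx : ∀ t, ContDiff ℝ 2 (p t))
    (hHJB : ∀ t, 0 ≤ t → ∀ x,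
      -deriv (fun s => v s x) t =
        q x - c - ‖gradient (v t) x‖ ^ 2 / (2 * R)
          - ⟪gradient (v t) x, gradient ν x⟫ + σ ^ 2 / 2 * lap (v t) x)
    (hFP : ∀ t, 0 ≤ t → ∀ x,
      deriv (fun s => p s x) t =
        vdiv (fun y => p t y • (gradient ν y + R⁻¹ • gradient (v t) y)) x
          + σ ^ 2 / 2 * lap (p t) x)
    (V : EuclideanSpace ℝ (Fin d) → ℝ)
    (hV : ∀ x, V x = q x + R / 2 * ‖gradient ν x‖ ^ 2 - σ ^ 2 * R / 2 * lap ν x)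
    (f g : ℝ → EuclideanSpace ℝ (Fin d) → ℝ)
    (hf : ∀ t x, f t x = Real.exp (-(v t x + R * ν x) / (σ ^ 2 * R)))
    (hg : ∀ t x, g t x = p t x / f t x) :
    ∀ t, 0 ≤ t → ∀ x,
      -deriv (fun s => g s x) t =
        -(c / (σ ^ 2 * R)) * g t x + V x / (σ ^ 2 * R) * g t x - σ ^ 2 / 2 * lap (g t) x := by
  intro t ht x
  have hσR : σ ^ 2 * R ≠ 0 := by positivity
  set k : ℝ := (σ ^ 2 * R)⁻¹ with hk
  have hgE : ∀ s y, g s y = p s y * Real.exp (k * (v s y + R * ν y)) := by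
    intro s y
    rw [hg, hf, show -(v s y + R * ν y) / (σ ^ 2 * R) = -(k * (v s y + R * ν y)) by
      rw [hk]; field_simp]
    rw [Real.exp_neg, div_eq_mul_inv, inv_inv]
  have hvd : Differentiable ℝ (v t) := (hvx t).differentiable (by norm_num)
  have hpd : Differentiable ℝ (p t) := (hpx t).differentiable (by norm_num)
  have hνd : Differentiable ℝ ν := hν.differentiable (by simp)
  have hGv : Differentiable ℝ (gradient (v t)) := grad_differentiable (hvx t)
  have hGp : Differentiable ℝ (gradient (p t)) := grad_differentiable (hpx t)
  have hGν : Differentiable ℝ (gradient ν) := grad_differentiable (hν.of_le (WithTop.coe_le_coe.mpr le_top))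
  have hEd : Differentiable ℝ (fun y => Real.exp (k * (v t y + R * ν y))) :=
    (Differentiable.const_mul (hvd.add (hνd.const_mul R)) k).exp
  have hUd : Differentiable ℝ (fun y => gradient (v t) y + R • gradient ν y) :=
    hGv.add (hGν.const_smul R)
  have hWd : Differentiable ℝ (fun y =>
      gradient (p t) y + (k * p t y) • (gradient (v t) y + R • gradient ν y)) :=
    hGp.add ((hpd.const_mul k).smul hUd)
  -- gradient of g t
  have hgradg : gradient (g t) = fun y =>
      Real.exp (k * (v t y + R * ν y)) •
        (gradient (p t) y + (k * p t y) • (gradient (v t) y + R • gradient ν y)) := by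
    funext y
    have h1 : g t = fun z => p t z * Real.exp (k * (v t z + R * ν z)) := funext (hgE t)
    rw [h1, gradient_fun_mul (hpd y) (hEd y),
      gradient_fun_exp ((Differentiable.const_mul (hvd.fun_add (hνd.const_mul R)) k) y),
      gradient_fun_const_mul _ ((hvd.fun_add (hνd.const_mul R)) y),
      gradient_fun_add (hvd y) ((hνd.const_mul R) y),
      gradient_fun_const_mul _ (hνd y)]
    module
  -- laplacian of g t
  have hlapU : vdiv (fun y => gradient (v t) y + R • gradient ν y) x
      = lap (v t) x + R * lap ν x := by
    rw [vdiv_fun_add (hGv x) ((hGν.fun_const_smul R) x), vdiv_fun_const_smul R (hGν x)]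
    rfl
  have hlapg : lap (g t) x =
      Real.exp (k * (v t x + R * ν x)) * k *
        ⟪gradient (v t) x + R • gradient ν x,
          gradient (p t) x + (k * p t x) • (gradient (v t) x + R • gradient ν x)⟫
      + Real.exp (k * (v t x + R * ν x)) *
        (lap (p t) x + (⟪k • gradient (p t) x,
            gradient (v t) x + R • gradient ν x⟫
          + k * p t x * (lap (v t) x + R * lap ν x))) := by
    show vdiv (gradient (g t)) x = _
    rw [hgradg, vdiv_fun_smul (hEd x) (hWd x),
      gradient_fun_exp ((Differentiable.const_mul (hvd.fun_add (hνd.const_mul R)) k) x),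
      gradient_fun_const_mul _ ((hvd.fun_add (hνd.const_mul R)) x),
      gradient_fun_add (hvd x) ((hνd.const_mul R) x),
      gradient_fun_const_mul _ (hνd x),
      vdiv_fun_add (hGp x) (((hpd.const_mul k).fun_smul hUd) x),
      vdiv_fun_smul ((hpd.const_mul k) x) (hUd x),
      gradient_fun_const_mul _ (hpd x), hlapU]
    have : vdiv (gradient (p t)) x = lap (p t) x := rfl
    rw [this]
    rw [show (Real.exp (k * (v t x + R * ν x)) • (k • (gradient (v t) x + R • gradient ν x)))
        = (Real.exp (k * (v t x + R * ν x)) * k) • (gradient (v t) x + R • gradient ν x) by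
      rw [smul_smul]]
    rw [real_inner_smul_left]
  -- FP expanded
  have hFP' : deriv (fun s => p s x) t =
      ⟪gradient (p t) x, gradient ν x + R⁻¹ • gradient (v t) x⟫
        + p t x * (lap ν x + R⁻¹ * lap (v t) x) + σ ^ 2 / 2 * lap (p t) x := by
    rw [hFP t ht x, vdiv_fun_smul (hpd x) ((hGν.fun_add (hGv.fun_const_smul R⁻¹)) x),
      vdiv_fun_add (hGν x) ((hGv.fun_const_smul R⁻¹) x), vdiv_fun_const_smul R⁻¹ (hGv x)]
    have h1 : vdiv (gradient (v t)) x = lap (v t) x := rfl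
    have h2 : vdiv (gradient ν) x = lap ν x := rfl
    rw [h1, h2]
  -- time derivative of g
  have hv' : HasDerivAt (fun s => v s x) (deriv (fun s => v s x) t) t :=
    (((hvt x).differentiable (by norm_num)) t).hasDerivAt
  have hp' : HasDerivAt (fun s => p s x) (deriv (fun s => p s x) t) t :=
    (((hpt x).differentiable (by norm_num)) t).hasDerivAt
  have hderivg : deriv (fun s => g s x) t
      = deriv (fun s => p s x) t * Real.exp (k * (v t x + R * ν x))
        + p t x * (Real.exp (k * (v t x + R * ν x)) * (k * deriv (fun s => v s x) t)) := by
    have hE' : HasDerivAt (fun s => Real.exp (k * (v s x + R * ν x)))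
        (Real.exp (k * (v t x + R * ν x)) * (k * deriv (fun s => v s x) t)) t :=
      ((hv'.add_const (R * ν x)).const_mul k).exp
    have heq : (fun s => g s x) = fun s => p s x * Real.exp (k * (v s x + R * ν x)) :=
      funext fun s => hgE s x
    rw [heq]
    exact (hp'.mul hE').deriv
  -- HJB as value of deriv v
  have hv2 : deriv (fun s => v s x) t =
      -(q x - c - ‖gradient (v t) x‖ ^ 2 / (2 * R)
          - ⟪gradient (v t) x, gradient ν x⟫ + σ ^ 2 / 2 * lap (v t) x) := by
    have := hHJB t ht x
    linarith
  -- assemble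
  rw [hderivg, hlapg, hgE t x, hV x, hFP', hv2]
  simp only [inner_add_left, inner_add_right, real_inner_smul_left, real_inner_smul_right,
    ← real_inner_self_eq_norm_sq]
  rw [real_inner_comm (gradient ν x) (gradient (v t) x),
    real_inner_comm (gradient ν x) (gradient (p t) x),
    real_inner_comm (gradient (v t) x) (gradient (p t) x)]
  rw [hk]
  field_simp
  ring
end

section
/- Let σ, R > 0, let ν, q : ℝ^d → ℝ be smooth, let c ∈ ℝ. Suppose f, g : [0,∞) × ℝ^d → ℝ are C¹ in t and C² in x, with f(t,x) > 0 for all (t,x), f satisfies −∂_t f = (c/(σ²R)) f − (V/(σ²R)) f + (σ²/2) Δf pointwise, and g satisfies −∂_t g = −(c/(σ²R)) g + (V/(σ²R)) g − (σ²/2) Δg pointwise, where V(x) := q(x) + (R/2)|∇ν(x)|² − (σ²R/2)Δν(x). Then v(t,x) := −σ²R · ln(f(t,x)) − R ν(x) satisfies the time-varying HJB equation −∂_t v = q − c − |∇v|²/(2R) − ∇v·∇ν + (σ²/2)Δv pointwise, and p(t,x) := f(t,x) g(t,x) satisfies the Fokker–Planck equation ∂_t p = ∇·((∇ν + ∇v/R)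 p) + (σ²/2) Δp pointwise. Moreover, if ∫_{ℝ^d} f(t,x) g(t,x) dx = 1 for all t ≥ 0, then ∫_{ℝ^d} p(t,x) dx = 1 for all t ≥ 0. -/
open MeasureTheory
open scoped BigOperators RealInnerProductSpace

section Aux

variable {d : ℕ} {f g : EuclideanSpace ℝ (Fin d) → ℝ} {x : EuclideanSpace ℝ (Fin d)}

lemma gradient_def (f : EuclideanSpace ℝ (Fin d) → ℝ) (x : EuclideanSpace ℝ (Fin d)) :
    gradient f x = (InnerProductSpace.toDual ℝ _).symm (fderiv ℝ f x) := rfl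

lemma inner_gradient_s4 (f : EuclideanSpace ℝ (Fin d) → ℝ) (x y : EuclideanSpace ℝ (Fin d)) :
    ⟪gradient f x, y⟫ = fderiv ℝ f x y :=
  InnerProductSpace.toDual_symm_apply

lemma gradient_apply (f : EuclideanSpace ℝ (Fin d) → ℝ) (x : EuclideanSpace ℝ (Fin d)) (i : Fin d) :
    gradient f x i = fderiv ℝ f x (EuclideanSpace.single i 1) := by
  rw [← inner_gradient_s4, real_inner_comm, EuclideanSpace.inner_single_left]
  simp

lemma gradient_const_mul (a : ℝ) (hf : DifferentiableAt ℝ f x) :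
    gradient (fun y => a * f y) x = a • gradient f x := by
  rw [gradient_def, gradient_def, fderiv_const_mul hf a, _root_.map_smul]

lemma gradient_sub' (hf : DifferentiableAt ℝ f x) (hg : DifferentiableAt ℝ g x) :
    gradient (fun y => f y - g y) x = gradient f x - gradient g x := by
  rw [gradient_def, gradient_def, gradient_def, fderiv_fun_sub hf hg, map_sub]

lemma gradient_mul' (hf : DifferentiableAt ℝ f x) (hg : DifferentiableAt ℝ g x) :
    gradient (fun y => f y * g y) x = f x • gradient g x + g x • gradient f x := by
  rw [gradient_def, gradient_def, gradient_def, fderiv_fun_mul hf hg, map_add, _root_.map_smul,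
    _root_.map_smul]

lemma gradient_log' (hf : DifferentiableAt ℝ f x) (h0 : f x ≠ 0) :
    gradient (fun y => Real.log (f y)) x = (f x)⁻¹ • gradient f x := by
  have h : HasFDerivAt (fun y => Real.log (f y)) ((f x)⁻¹ • fderiv ℝ f x) x :=
    (Real.hasDerivAt_log h0).comp_hasFDerivAt x hf.hasFDerivAt
  rw [gradient_def, gradient_def, h.fderiv, _root_.map_smul]

lemma gradient_inv' (hf : DifferentiableAt ℝ f x) (h0 : f x ≠ 0) :
    gradient (fun y => (f y)⁻¹) x = (-((f x) ^ 2)⁻¹) • gradient f x := by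
  have h : HasFDerivAt (fun y => (f y)⁻¹) ((-((f x) ^ 2)⁻¹) • fderiv ℝ f x) x :=
    (hasDerivAt_inv h0).comp_hasFDerivAt x hf.hasFDerivAt
  rw [gradient_def, gradient_def, h.fderiv, _root_.map_smul]

lemma differentiable_gradient (hf : ContDiff ℝ 2 f) : Differentiable ℝ (gradient f) := by
  have h1 : ContDiff ℝ 1 (fderiv ℝ f) := hf.fderiv_right (by norm_num)
  exact ((InnerProductSpace.toDual ℝ
    (EuclideanSpace ℝ (Fin d))).symm.toContinuousLinearEquiv.differentiable).comp
    (h1.differentiable one_ne_zero)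

lemma vdiv_add' {X Y : EuclideanSpace ℝ (Fin d) → EuclideanSpace ℝ (Fin d)}
    (hX : DifferentiableAt ℝ X x) (hY : DifferentiableAt ℝ Y x) :
    vdiv (fun y => X y + Y y) x = vdiv X x + vdiv Y x := by
  unfold vdiv
  rw [← Finset.sum_add_distrib]
  refine Finset.sum_congr rfl fun i _ => ?_
  rw [fderiv_fun_add hX hY]
  simp [PiLp.add_apply]

lemma vdiv_smul' {c : EuclideanSpace ℝ (Fin d) → ℝ}
    {X : EuclideanSpace ℝ (Fin d) → EuclideanSpace ℝ (Fin d)}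
    (hc : DifferentiableAt ℝ c x) (hX : DifferentiableAt ℝ X x) :
    vdiv (fun y => c y • X y) x = ⟪gradient c x, X x⟫ + c x * vdiv X x := by
  unfold vdiv
  have h : ∀ i : Fin d, fderiv ℝ (fun y => c y • X y) x (EuclideanSpace.single i 1) i
      = c x * fderiv ℝ X x (EuclideanSpace.single i 1) i
        + fderiv ℝ c x (EuclideanSpace.single i 1) * X x i := by
    intro i
    rw [fderiv_fun_smul hc hX]
    simp [PiLp.add_apply, PiLp.smul_apply, smul_eq_mul]
  simp_rw [h]
  rw [Finset.sum_add_distrib, ← Finset.mul_sum]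
  rw [PiLp.inner_apply]
  simp_rw [RCLike.inner_apply, starRingEnd_apply, star_trivial, gradient_apply]
  rw [add_comm]
  congr 1
  exact Finset.sum_congr rfl fun i _ => mul_comm (_ : ℝ) _

lemma norm_smul_add_smul_sq (A B : ℝ) (u w : EuclideanSpace ℝ (Fin d)) :
    ‖A • u + B • w‖ ^ 2 = A ^ 2 * ‖u‖ ^ 2 + 2 * (A * B) * ⟪u, w⟫ + B ^ 2 * ‖w‖ ^ 2 := by
  rw [← real_inner_self_eq_norm_sq, ← real_inner_self_eq_norm_sq, ← real_inner_self_eq_norm_sq,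
    real_inner_add_add_self]
  simp only [real_inner_smul_left, real_inner_smul_right]
  ring

lemma inner_smul_add_smul (A B : ℝ) (u w z : EuclideanSpace ℝ (Fin d)) :
    ⟪A • u + B • w, z⟫ = A * ⟪u, z⟫ + B * ⟪w, z⟫ := by
  rw [inner_add_left, real_inner_smul_left, real_inner_smul_left]

end Aux

/-- If `f > 0` and `g` solve the pair of decoupled imaginary-time Schrödinger equations, then
`v = −σ²R ln f − Rν` solves the time-varying HJB equation and `p = f·g` solves the
Fokker–Planck equation; moreover, if `∫ f g = 1` for all `t ≥ 0`, then `∫ p = 1` for all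
`t ≥ 0`. -/
theorem schrodinger_pair_gives_HJB_FP_solutions
    (d : ℕ) (σ R : ℝ) (hσ : 0 < σ) (hR : 0 < R)
    (ν q : EuclideanSpace ℝ (Fin d) → ℝ) (hν : ContDiff ℝ (⊤ : ℕ∞) ν) (hq : ContDiff ℝ (⊤ : ℕ∞) q)
    (c : ℝ)
    (V : EuclideanSpace ℝ (Fin d) → ℝ)
    (hV : ∀ x, V x = q x + R / 2 * ‖gradient ν x‖ ^ 2 - σ ^ 2 * R / 2 * lap ν x)
    (f g : ℝ → EuclideanSpace ℝ (Fin d) → ℝ)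
    (hft : ∀ x, ContDiff ℝ 1 fun t => f t x)
    (hfx : ∀ t, ContDiff ℝ 2 (f t))
    (hgt : ∀ x, ContDiff ℝ 1 fun t => g t x)
    (hgx : ∀ t, ContDiff ℝ 2 (g t))
    (hfpos : ∀ t x, 0 < f t x)
    (hfeq : ∀ t, 0 ≤ t → ∀ x,
      -deriv (fun s => f s x) t =
        c / (σ ^ 2 * R) * f t x - V x / (σ ^ 2 * R) * f t x + σ ^ 2 / 2 * lap (f t) x)
    (hgeq : ∀ t, 0 ≤ t → ∀ x,
      -deriv (fun s => g s x) t =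
        -(c / (σ ^ 2 * R)) * g t x + V x / (σ ^ 2 * R) * g t x - σ ^ 2 / 2 * lap (g t) x)
    (v p : ℝ → EuclideanSpace ℝ (Fin d) → ℝ)
    (hv : ∀ t x, v t x = -(σ ^ 2 * R) * Real.log (f t x) - R * ν x)
    (hp : ∀ t x, p t x = f t x * g t x) :
    (∀ t, 0 ≤ t → ∀ x,
      -deriv (fun s => v s x) t =
        q x - c - ‖gradient (v t) x‖ ^ 2 / (2 * R)
          - ⟪gradient (v t) x, gradient ν x⟫ + σ ^ 2 / 2 * lap (v t) x) ∧
    (∀ t, 0 ≤ t → ∀ x,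
      deriv (fun s => p s x) t =
        vdiv (fun y => p t y • (gradient ν y + R⁻¹ • gradient (v t) y)) x
          + σ ^ 2 / 2 * lap (p t) x) ∧
    ((∀ t, 0 ≤ t → (∫ x, f t x * g t x) = 1) → ∀ t, 0 ≤ t → (∫ x, p t x) = 1) := by
  have hR0 : R ≠ 0 := hR.ne'
  have hσ0 : σ ≠ 0 := hσ.ne'
  have hνc2 : ContDiff ℝ 2 ν := hν.of_le (WithTop.coe_le_coe.mpr le_top)
  have hνd : Differentiable ℝ ν := hνc2.differentiable two_ne_zero
  have hGν : Differentiable ℝ (gradient ν) := differentiable_gradient hνc2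
  -- pointwise facts about f, g at a given time t
  have hFd : ∀ t, Differentiable ℝ (f t) := fun t => (hfx t).differentiable two_ne_zero
  have hGd : ∀ t, Differentiable ℝ (g t) := fun t => (hgx t).differentiable two_ne_zero
  have hGF : ∀ t, Differentiable ℝ (gradient (f t)) := fun t => differentiable_gradient (hfx t)
  have hGG : ∀ t, Differentiable ℝ (gradient (g t)) := fun t => differentiable_gradient (hgx t)
  have hne : ∀ t y, f t y ≠ 0 := fun t y => (hfpos t y).ne'
  have hlogd : ∀ t, Differentiable ℝ (fun y => Real.log (f t y)) :=
    fun t y => ((hFd t) y).log (hne t y)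
  have hinvd : ∀ t, Differentiable ℝ (fun y => (f t y)⁻¹) :=
    fun t y => ((hFd t) y).inv (hne t y)
  -- gradient of v t
  have hgv : ∀ t y, gradient (v t) y
      = (-(σ ^ 2 * R) * (f t y)⁻¹) • gradient (f t) y + (-R) • gradient ν y := by
    intro t y
    have hvt : v t = fun z => -(σ ^ 2 * R) * Real.log (f t z) - R * ν z :=
      funext fun z => hv t z
    rw [hvt, gradient_sub' ((hlogd t y).const_mul _) ((hνd y).const_mul R),
      gradient_const_mul _ (hlogd t y), gradient_const_mul R (hνd y),
      gradient_log' (hFd t y) (hne t y), smul_smul]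
    module
  -- laplacian of v t
  have hlv : ∀ t x, lap (v t) x
      = (σ ^ 2 * R) * ((f t x) ^ 2)⁻¹ * ‖gradient (f t) x‖ ^ 2
        - (σ ^ 2 * R) * (f t x)⁻¹ * lap (f t) x - R * lap ν x := by
    intro t x
    have h1 : gradient (v t)
        = fun y => (-(σ ^ 2 * R) * (f t y)⁻¹) • gradient (f t) y + (-R) • gradient ν y :=
      funext (hgv t)
    have hcd : DifferentiableAt ℝ (fun y => -(σ ^ 2 * R) * (f t y)⁻¹) x :=
      ((hinvd t) x).const_mul _
    simp only [lap]
    rw [h1, vdiv_add' (hcd.fun_smul ((hGF t) x)) (((hGν) x).fun_const_smul (-R)),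
      vdiv_smul' hcd ((hGF t) x),
      vdiv_smul' (differentiableAt_const (-R)) ((hGν) x),
      gradient_const_mul _ ((hinvd t) x), gradient_inv' ((hFd t) x) (hne t x),
      gradient_fun_const]
    rw [smul_smul, real_inner_smul_left, real_inner_self_eq_norm_sq]
    simp only [inner_zero_left]
    ring
  refine ⟨?_, ?_, ?_⟩
  · -- HJB
    intro t ht x
    have hdF : HasDerivAt (fun s => f s x) (deriv (fun s => f s x) t) t :=
      (((hft x).differentiable one_ne_zero) t).hasDerivAt
    have hdv : deriv (fun s => v s x) t
        = -(σ ^ 2 * R) * ((f t x)⁻¹ * deriv (fun s => f s x) t) := by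
      have hfun : (fun s => v s x) = fun s => -(σ ^ 2 * R) * Real.log (f s x) - R * ν x :=
        funext fun s => hv s x
      rw [hfun]
      exact ((((Real.hasDerivAt_log (hne t x)).comp t hdF).const_mul
        (-(σ ^ 2 * R))).sub_const (R * ν x)).deriv
    have hderf : deriv (fun s => f s x) t
        = -(c / (σ ^ 2 * R) * f t x - V x / (σ ^ 2 * R) * f t x
            + σ ^ 2 / 2 * lap (f t) x) := by
      have := hfeq t ht x; linarith
    rw [hdv, hlv t x, hgv t x, hderf, hV x,
      norm_smul_add_smul_sq, inner_smul_add_smul, real_inner_self_eq_norm_sq]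
    have hF0 : f t x ≠ 0 := hne t x
    generalize ‖gradient (f t) x‖ = nf
    generalize ‖gradient ν x‖ = nν
    generalize ⟪gradient (f t) x, gradient ν x⟫ = ip
    generalize lap (f t) x = Lf
    generalize lap ν x = Lν
    generalize hF : f t x = F at hF0 ⊢
    field_simp
    ring
  · -- Fokker--Planck
    intro t ht x
    have hdF : HasDerivAt (fun s => f s x) (deriv (fun s => f s x) t) t :=
      (((hft x).differentiable one_ne_zero) t).hasDerivAt
    have hdG : HasDerivAt (fun s => g s x) (deriv (fun s => g s x) t) t :=
      (((hgt x).differentiable one_ne_zero) t).hasDerivAt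
    have hdp : deriv (fun s => p s x) t
        = deriv (fun s => f s x) t * g t x + f t x * deriv (fun s => g s x) t := by
      have hfun : (fun s => p s x) = fun s => f s x * g s x := funext fun s => hp s x
      rw [hfun]
      exact (hdF.mul hdG).deriv
    -- the drift vector field is -σ² g ∇f
    have hXeq : ∀ y, p t y • (gradient ν y + R⁻¹ • gradient (v t) y)
        = (-(σ ^ 2) * g t y) • gradient (f t) y := by
      intro y
      rw [hp t y, hgv t y]
      match_scalars <;> (field_simp [hne t y]; try ring)
    have hvd : vdiv (fun y => p t y • (gradient ν y + R⁻¹ • gradient (v t) y)) x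
        = -(σ ^ 2) * ⟪gradient (f t) x, gradient (g t) x⟫
          + (-(σ ^ 2) * g t x) * lap (f t) x := by
      have h1 : (fun y => p t y • (gradient ν y + R⁻¹ • gradient (v t) y))
          = fun y => (-(σ ^ 2) * g t y) • gradient (f t) y := funext hXeq
      rw [h1, vdiv_smul' (((hGd t) x).const_mul _) ((hGF t) x),
        gradient_const_mul _ ((hGd t) x), real_inner_smul_left,
        real_inner_comm]
      rfl
    have hlp : lap (p t) x
        = f t x * lap (g t) x + 2 * ⟪gradient (f t) x, gradient (g t) x⟫
          + g t x * lap (f t) x := by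
      have h1 : gradient (p t)
          = fun y => f t y • gradient (g t) y + g t y • gradient (f t) y := by
        funext y
        have hpt : p t = fun z => f t z * g t z := funext fun z => hp t z
        rw [hpt, gradient_mul' ((hFd t) y) ((hGd t) y)]
      simp only [lap]
      rw [h1, vdiv_add' (((hFd t) x).fun_smul ((hGG t) x)) (((hGd t) x).fun_smul ((hGF t) x)),
        vdiv_smul' ((hFd t) x) ((hGG t) x), vdiv_smul' ((hGd t) x) ((hGF t) x),
        real_inner_comm (gradient (g t) x)]
      ring
    have hderf : deriv (fun s => f s x) t
        = -(c / (σ ^ 2 * R) * f t x - V x / (σ ^ 2 * R) * f t x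
            + σ ^ 2 / 2 * lap (f t) x) := by
      have := hfeq t ht x; linarith
    have hderg : deriv (fun s => g s x) t
        = -(-(c / (σ ^ 2 * R)) * g t x + V x / (σ ^ 2 * R) * g t x
            - σ ^ 2 / 2 * lap (g t) x) := by
      have := hgeq t ht x; linarith
    rw [hdp, hderf, hderg, hvd, hlp]
    generalize ⟪gradient (f t) x, gradient (g t) x⟫ = ip
    generalize lap (f t) x = Lf
    generalize lap (g t) x = Lg
    generalize f t x = F
    generalize g t x = G
    generalize V x = Vx
    ring
  · -- normalization
    intro h t ht
    have : (∫ x, p t x) = ∫ x, f t x * g t x := by simp_rw [hp]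
    rw [this]
    exact h t ht
end

section
/- Let σ, R > 0, let ν, q : ℝ^d → ℝ be smooth, let c ∈ ℝ, and suppose v : [0,∞) × ℝ^d → ℝ is C¹ in t and C² in x and satisfies the time-varying HJB equation −∂_t v = q − c − |∇v|²/(2R) − ∇v·∇ν + (σ²/2)Δv pointwise. Then the function v̂(t,x) := v(t,x) + R ν(x) satisfies the modified HJB equation −∂_t v̂ = V − c − |∇v̂|²/(2R) + (σ²/2) Δv̂ pointwise on [0,∞) × ℝ^d, where V(x) := q(x) + (R/2)|∇ν(x)|² − (σ²R/2)Δν(x). -/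
open MeasureTheory
open scoped BigOperators RealInnerProductSpace

lemma gradient_add_const_mul {d : ℕ} (f g : EuclideanSpace ℝ (Fin d) → ℝ) (R : ℝ)
    (hf : Differentiable ℝ f) (hg : Differentiable ℝ g) (x : EuclideanSpace ℝ (Fin d)) :
    gradient (fun y => f y + R * g y) x = gradient f x + R • gradient g x := by
  unfold gradient
  rw [fderiv_fun_add (hf x) (((hg x).const_mul R : _)), fderiv_const_mul (hg x), map_add,
    _root_.map_smul]

lemma gradient_differentiable {d : ℕ} (f : EuclideanSpace ℝ (Fin d) → ℝ)
    (hf : ContDiff ℝ 2 f) : Differentiable ℝ (gradient f) := by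
  have h1 : Differentiable ℝ (fderiv ℝ f) := by
    have := (hf.fderiv_right (m := 1) (by norm_num)).differentiable (by norm_num)
    exact this
  have : gradient f =
      fun y => (InnerProductSpace.toDual ℝ (EuclideanSpace ℝ (Fin d))).symm (fderiv ℝ f y) :=
    rfl
  rw [this]
  exact fun y => ((InnerProductSpace.toDual ℝ
    (EuclideanSpace ℝ (Fin d))).symm.differentiableAt).comp y (h1 y)

lemma lap_add_const_mul {d : ℕ} (f g : EuclideanSpace ℝ (Fin d) → ℝ) (R : ℝ)
    (hf : ContDiff ℝ 2 f) (hg : ContDiff ℝ 2 g) (x : EuclideanSpace ℝ (Fin d)) :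
    lap (fun y => f y + R * g y) x = lap f x + R * lap g x := by
  have hDf : Differentiable ℝ (gradient f) := gradient_differentiable f hf
  have hDg : Differentiable ℝ (gradient g) := gradient_differentiable g hg
  have hgrad : gradient (fun y => f y + R * g y) =
      fun y => gradient f y + R • gradient g y := by
    funext y
    exact gradient_add_const_mul f g R (hf.differentiable (by norm_num))
      (hg.differentiable (by norm_num)) y
  unfold lap vdiv
  rw [hgrad]
  have hfd : ∀ y, fderiv ℝ (fun y => gradient f y + R • gradient g y) y =
      fderiv ℝ (gradient f) y + R • fderiv ℝ (gradient g) y := by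
    intro y
    rw [fderiv_fun_add (g := fun y => R • gradient g y) (hDf y) ((hDg y).const_smul R), fderiv_fun_const_smul (hDg y)]
  simp only [hfd]
  rw [Finset.mul_sum, ← Finset.sum_add_distrib]
  exact Finset.sum_congr rfl fun i _ => by
    simp [ContinuousLinearMap.add_apply, ContinuousLinearMap.smul_apply]

/-- If `v` solves the time-varying HJB equation, then `v̂ = v + Rν` solves the modified HJB
equation `−∂ₜv̂ = V − c − |∇v̂|²/(2R) + (σ²/2)Δv̂` of the fictitious integrator problem,
with `V = q + (R/2)|∇ν|² − (σ²R/2)Δν`. -/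
theorem shifted_value_solves_modified_HJB
    (d : ℕ) (σ R : ℝ) (hσ : 0 < σ) (hR : 0 < R)
    (ν q : EuclideanSpace ℝ (Fin d) → ℝ) (hν : ContDiff ℝ (⊤ : ℕ∞) ν) (hq : ContDiff ℝ (⊤ : ℕ∞) q)
    (c : ℝ) (v : ℝ → EuclideanSpace ℝ (Fin d) → ℝ)
    (hvt : ∀ x, ContDiff ℝ 1 fun t => v t x)
    (hvx : ∀ t, ContDiff ℝ 2 (v t))
    (hHJB : ∀ t, 0 ≤ t → ∀ x,
      -deriv (fun s => v s x) t =
        q x - c - ‖gradient (v t) x‖ ^ 2 / (2 * R)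
          - ⟪gradient (v t) x, gradient ν x⟫ + σ ^ 2 / 2 * lap (v t) x)
    (V : EuclideanSpace ℝ (Fin d) → ℝ)
    (hV : ∀ x, V x = q x + R / 2 * ‖gradient ν x‖ ^ 2 - σ ^ 2 * R / 2 * lap ν x)
    (vhat : ℝ → EuclideanSpace ℝ (Fin d) → ℝ)
    (hvhat : ∀ t x, vhat t x = v t x + R * ν x) :
    ∀ t, 0 ≤ t → ∀ x,
      -deriv (fun s => vhat s x) t =
        V x - c - ‖gradient (vhat t) x‖ ^ 2 / (2 * R) + σ ^ 2 / 2 * lap (vhat t) x := by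
  intro t ht x
  have hν2 : ContDiff ℝ 2 ν := hν.of_le (by simpa using (WithTop.coe_le_coe.mpr (le_top : (2 : ℕ∞) ≤ ⊤) : ((2 : ℕ∞) : WithTop ℕ∞) ≤ ((⊤ : ℕ∞) : WithTop ℕ∞)))
  have hνd : Differentiable ℝ ν := hν2.differentiable (by norm_num)
  have hvd : Differentiable ℝ (v t) := (hvx t).differentiable (by norm_num)
  have hvhatfun : vhat t = fun y => v t y + R * ν y := funext fun y => hvhat t y
  -- time derivative
  have hderiv : deriv (fun s => vhat s x) t = deriv (fun s => v s x) t := by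
    have : (fun s => vhat s x) = fun s => v s x + R * ν x := funext fun s => hvhat s x
    rw [this, deriv_add_const]
  -- gradient
  have hgrad : gradient (vhat t) x = gradient (v t) x + R • gradient ν x := by
    rw [hvhatfun]; exact gradient_add_const_mul (v t) ν R hvd hνd x
  -- laplacian
  have hlap : lap (vhat t) x = lap (v t) x + R * lap ν x := by
    rw [hvhatfun]; exact lap_add_const_mul (v t) ν R (hvx t) hν2 x
  have hnorm : ‖gradient (vhat t) x‖ ^ 2 =
      ‖gradient (v t) x‖ ^ 2 + 2 * (R * ⟪gradient (v t) x, gradient ν x⟫)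
        + R ^ 2 * ‖gradient ν x‖ ^ 2 := by
    rw [hgrad, @norm_add_sq_real, real_inner_smul_right, norm_smul]
    rw [Real.norm_eq_abs, mul_pow, sq_abs]
  rw [hderiv, hHJB t ht x, hV, hnorm, hlap]
  have hRne : (2 * R) ≠ 0 := by positivity
  field_simp
  ring
end
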